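/- If w' ∈ W_n is obtained from w ∈ W_n by a single admissible transformation (w' = L_j(w) for a left admissible L_j, or w' = R_j(w) for a right admissible R_j), then π_i(w') = −π_i(w) for every 0 ≤ i ≤ r−1. -/

import Mathlib

open scoped BigOperators

/-!
Common definitions: the complex reflection group `G(r,1,n)` recorded in one-line
notation, its one-dimensional representations, the generalized Robinson–Schensted
map to pairs of `r`-multitableaux, and the associated tableau statistics.
-/

/-- An element of `W_n = G(r,1,n)` in one-line notation
`w = [ζ^{a 0} σ 0, …, ζ^{a (n-1)} σ (n-1)]`: the nonzero entry of column `i`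
is `ζ ^ (a i)` and lies in row `σ i`. -/
@[ext]
structure GW (r n : ℕ) where
  a : Fin n → ZMod r
  σ : Equiv.Perm (Fin n)

namespace GW

variable {r n : ℕ}

instance : Mul (GW r n) := ⟨fun w v => ⟨fun j => w.a (v.σ j) + v.a j, w.σ * v.σ⟩⟩
instance : One (GW r n) := ⟨⟨fun _ => 0, 1⟩⟩
instance : Inv (GW r n) := ⟨fun w => ⟨fun j => -(w.a (w.σ⁻¹ j)), w.σ⁻¹⟩⟩

@[simp] lemma mul_a (w v : GW r n) (j : Fin n) : (w * v).a j = w.a (v.σ j) + v.a j := rfl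
@[simp] lemma mul_sigma (w v : GW r n) : (w * v).σ = w.σ * v.σ := rfl
@[simp] lemma one_a (j : Fin n) : (1 : GW r n).a j = 0 := rfl
@[simp] lemma one_sigma : (1 : GW r n).σ = 1 := rfl
@[simp] lemma inv_a (w : GW r n) (j : Fin n) : (w⁻¹).a j = -(w.a (w.σ⁻¹ j)) := rfl
@[simp] lemma inv_sigma (w : GW r n) : (w⁻¹).σ = w.σ⁻¹ := rfl

instance : Group (GW r n) where
  mul_assoc w v u := by
    ext j
    · simp [Equiv.Perm.mul_apply, add_assoc]
    · simp [mul_assoc]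
  one_mul w := by ext j <;> simp
  mul_one w := by ext j <;> simp
  inv_mul_cancel w := by
    ext j
    · simp
    · simp

end GW

/-- `ζ = exp(2π√-1 / r)`, a primitive `r`-th root of unity. -/
noncomputable def zeta (r : ℕ) : ℂ := Complex.exp (2 * Real.pi * Complex.I / r)

/-- The one-dimensional representation `sgn_i` of `W_n = G(r,1,n)`:
`sgn_i w = ζ^{i (a_1 + ⋯ + a_n)} ⬝ sgn σ`. -/
noncomputable def sgnRep (r n : ℕ) (i : ℕ) (w : GW r n) : ℂ :=
  zeta r ^ (i * ∑ j, (w.a j).val) * ((Equiv.Perm.sign w.σ : ℤ) : ℂ)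

/-- A tableau, recorded as its list of rows of labels. -/
abbrev Tab := List (List ℕ)

/-- Robinson–Schensted row insertion of the value `x` into a tableau. -/
def rowInsert : ℕ → Tab → Tab
  | x, [] => [[x]]
  | x, row :: rest =>
    if h : row.findIdx (fun y => decide (x < y)) < row.length then
      row.set (row.findIdx (fun y => decide (x < y))) x ::
        rowInsert (row.get ⟨row.findIdx (fun y => decide (x < y)), h⟩) rest
    else (row ++ [x]) :: rest

/-- The shape of a tableau: its list of row lengths. -/
def shape (T : Tab) : List ℕ := T.map List.length

/-- Append the label `lab` at the end of row `i` of the (recording) tableau `Q`. -/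
def place (Q : Tab) (i lab : ℕ) : Tab :=
  if i < Q.length then Q.set i ((Q.getD i []) ++ [lab]) else Q ++ [[lab]]

/-- One step of the Robinson–Schensted algorithm: insert the value `x` into the
insertion tableau and record the label `lab` in the new box of the recording
tableau. -/
def RSstep : Tab × Tab → ℕ × ℕ → Tab × Tab := fun PQ xl =>
  let P' := rowInsert xl.1 PQ.1
  let i := (List.range P'.length).findIdx
    (fun i => decide ((PQ.1.getD i []).length < (P'.getD i []).length))
  (P', place PQ.2 i xl.2)

/-- The classical Robinson–Schensted correspondence applied to a word of
(value, label) pairs, producing the insertion and recording tableaux. -/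
def RSword (word : List (ℕ × ℕ)) : Tab × Tab := word.foldl RSstep ([], [])

/-- The positions `i` (in increasing order) whose attached exponent `a i` equals `k`. -/
def labelIdx {r n : ℕ} (w : GW r n) (k : ℕ) : List (Fin n) :=
  (List.finRange n).filter (fun i => decide ((w.a i).val = k))

/-- The word `w^(k)` together with its recording labels: the values `σ i` (1-based)
attached to the positions `i` (1-based) with `a i = k`, in increasing order of `i`. -/
def wordPairs {r n : ℕ} (w : GW r n) (k : ℕ) : List (ℕ × ℕ) :=
  (labelIdx w k).map (fun i => ((w.σ i : ℕ) + 1, (i : ℕ) + 1))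

/-- The insertion multitableau `P(w)` of the generalized Robinson–Schensted map. -/
def Ptab {r n : ℕ} (w : GW r n) : Fin r → Tab := fun k => (RSword (wordPairs w k)).1

/-- The recording multitableau `Q(w)` of the generalized Robinson–Schensted map. -/
def Qtab {r n : ℕ} (w : GW r n) : Fin r → Tab := fun k => (RSword (wordPairs w k)).2

/-- The set of labels of a tableau. -/
def labels (T : Tab) : Finset ℕ := T.flatten.toFinset

/-- The (0-based) index of the row of `T` containing the label `x`. -/
def rowOf (T : Tab) (x : ℕ) : ℕ := T.findIdx (fun row => decide (x ∈ row))

/-- The number of inversions of a tableau: pairs `(i, j)` with `i < j` and the box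
labeled `i` in a row strictly below the box labeled `j`. -/
def invTab (T : Tab) : ℕ :=
  ((labels T ×ˢ labels T).filter (fun p => p.1 < p.2 ∧ rowOf T p.2 < rowOf T p.1)).card

/-- `crossInv S T` is the number of pairs `(j, i)` with `j > i`, `j` a label of `S`
and `i` a label of `T`, i.e. the cardinality of `Inv(S, T)`. -/
def crossInv (S T : Tab) : ℕ :=
  ((labels S ×ˢ labels T).filter (fun p => p.2 < p.1)).card

/-- The number of inversions of a multitableau. -/
def invMulti {r : ℕ} (T : Fin r → Tab) : ℕ :=
  (∑ k, invTab (T k)) + ∑ k, ∑ l, if k < l then crossInv (T k) (T l) else 0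

/-- The sign `(-1)^{inv T}` of a multitableau. -/
def signMulti {r : ℕ} (T : Fin r → Tab) : ℂ := (-1) ^ invMulti T

/-- The number of boxes in the even-indexed rows (1-based indexing) of a tableau. -/
def eTab (T : Tab) : ℕ :=
  ∑ i ∈ Finset.range T.length, if i % 2 = 1 then (T.getD i []).length else 0

/-- The total number of boxes in the even-indexed rows of a multitableau. -/
def eMulti {r : ℕ} (T : Fin r → Tab) : ℕ := ∑ k, eTab (T k)

/-- The number of boxes of a tableau. -/
def sizeTab (T : Tab) : ℕ := T.flatten.length

/-- `2 ⬝ spin T = Σ_k k ⬝ |sh(T_k)|`. -/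
def twoSpin {r : ℕ} (T : Fin r → Tab) : ℕ := ∑ k : Fin r, (k : ℕ) * sizeTab (T k)

/-- The spin statistic `spin T = (1/2) Σ_k k ⬝ |sh(T_k)|`. -/
def spin {r : ℕ} (T : Fin r → Tab) : ℚ := (twoSpin T : ℚ) / 2

/-- The function `π_i(w) = (-1)^{e(P)} (ζ^i)^{spin P + spin Q} sign(P) sign(Q)`
where `(P, Q) = RS(w)`. -/
noncomputable def piStat (r n : ℕ) (i : ℕ) (w : GW r n) : ℂ :=
  (-1) ^ eMulti (Ptab w) *
    (zeta r ^ i) ^ (((spin (Ptab w) + spin (Qtab w) : ℚ) : ℂ)) *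
    signMulti (Ptab w) * signMulti (Qtab w)

/-- `T` is a standard Young `r`-multitableau of rank `n`: each component consists of
nonempty rows of weakly decreasing lengths, labels strictly increase along rows and
down columns, and the labels used are exactly `1, …, n`, each exactly once. -/
def IsStandardMulti (r n : ℕ) (T : Fin r → Tab) : Prop :=
  (∀ k : Fin r,
      (∀ row ∈ T k, row ≠ [] ∧ List.Chain' (· < ·) row) ∧
      List.Chain' (fun r1 r2 => r2.length ≤ r1.length ∧
        ∀ j < r2.length, r1.getD j 0 < r2.getD j 0) (T k)) ∧
  (∑ k : Fin r, ((T k).flatten : Multiset ℕ)) = (Finset.Icc 1 n).val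

/-- A multitableau is ascending if every label of `T k` is smaller than every label
of `T (k+1)`. -/
def AscendingMulti {r : ℕ} (T : Fin r → Tab) : Prop :=
  ∀ (k : ℕ) (h : k + 1 < r),
    ∀ x ∈ labels (T ⟨k, by omega⟩), ∀ y ∈ labels (T ⟨k + 1, h⟩), x < y

/-- An element `w ∈ W_n` is ascending if its exponents increase weakly and, for each
`k < r - 1`, every element of the word `w^(k)` is smaller than every element of
`w^(k+1)`. -/
def AscendingElem {r n : ℕ} (w : GW r n) : Prop :=
  (∀ i j : Fin n, i ≤ j → (w.a i).val ≤ (w.a j).val) ∧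
  ∀ k : ℕ, k + 1 < r →
    ∀ x ∈ (wordPairs w k).map Prod.fst, ∀ y ∈ (wordPairs w (k + 1)).map Prod.fst, x < y

/-- The generator `s_0 = [ζ·1, 2, …, n]`. -/
def s0El (r n : ℕ) : GW r n := ⟨fun i => if (i : ℕ) = 0 then 1 else 0, 1⟩

/-- The generator `s_j` (for `1 ≤ j ≤ n - 1`): the permutation matrix of the
transposition interchanging `j` and `j + 1` (1-based values). -/
def sEl (r n : ℕ) (j : ℕ) (h1 : 1 ≤ j) (h2 : j + 1 ≤ n) : GW r n :=
  ⟨fun _ => 0, Equiv.swap ⟨j - 1, by omega⟩ ⟨j, by omega⟩⟩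

/-- The left operator `L_j(w) = s_j ⬝ w`. -/
def Lop {r n : ℕ} (w : GW r n) (j : ℕ) (h1 : 1 ≤ j) (h2 : j + 1 ≤ n) : GW r n :=
  sEl r n j h1 h2 * w

/-- The right operator `R_j(w) = w ⬝ s_j`. -/
def Rop {r n : ℕ} (w : GW r n) (j : ℕ) (h1 : 1 ≤ j) (h2 : j + 1 ≤ n) : GW r n :=
  w * sEl r n j h1 h2

/-- `L_j` is left admissible for `w`: the exponents attached to the entries with
values `j` and `j+1` differ. -/
def LeftAdm {r n : ℕ} (w : GW r n) (j : ℕ) (h1 : 1 ≤ j) (h2 : j + 1 ≤ n) : Prop :=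
  w.a (w.σ⁻¹ ⟨j - 1, by omega⟩) ≠ w.a (w.σ⁻¹ ⟨j, by omega⟩)

/-- `R_j` is right admissible for `w`: the exponents in positions `j` and `j+1`
differ, i.e. `a_j ≠ a_{j+1}`. -/
def RightAdm {r n : ℕ} (w : GW r n) (j : ℕ) (h1 : 1 ≤ j) (h2 : j + 1 ≤ n) : Prop :=
  w.a ⟨j - 1, by omega⟩ ≠ w.a ⟨j, by omega⟩

/-- A single admissible transformation: `w ↦ L_j(w)` for a left admissible `L_j`,
or `w ↦ R_j(w)` for a right admissible `R_j`. -/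
inductive AdmStep (r n : ℕ) : GW r n → GW r n → Prop
  | left (w : GW r n) (j : ℕ) (h1 : 1 ≤ j) (h2 : j + 1 ≤ n)
      (ha : LeftAdm w j h1 h2) : AdmStep r n w (Lop w j h1 h2)
  | right (w : GW r n) (j : ℕ) (h1 : 1 ≤ j) (h2 : j + 1 ≤ n)
      (ha : RightAdm w j h1 h2) : AdmStep r n w (Rop w j h1 h2)

/-!
A left admissible `L_j` exchanges the values `j` and `j + 1` of `w`, which lie in different
words `w^(k)`; inside each word the exchange therefore preserves the relative order of the
values, and row insertion commutes with such a relabelling, so `P` changes by swapping the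
labels `j` and `j + 1` while `Q` stays the same. Dually, a right admissible `R_j` exchanges the
positions `j` and `j + 1`, which lie in different words, so every `w^(k)` is unchanged and only
the recording labels `j` and `j + 1` of `Q` are swapped.

Swapping two labels that sit in different components of a multitableau changes neither the
shapes (hence neither `e` nor `spin`) nor the inversions inside a component, and it changes the
cross inversions by exactly one, namely the pair `{j, j + 1}`; so the sign of that multitableau
flips and `π_i` changes sign.
-/

open Function

theorem Equiv.swap_strictMonoOn_of_covBy {α : Type*} [LinearOrder α] {x y : α} (hxy : x ⋖ y)
    {s : Set α} (hs : ¬(x ∈ s ∧ y ∈ s)) : StrictMonoOn (Equiv.swap x y) s := by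
  intro a ha b hb hab
  have above : ∀ c, x < c → y ≤ c := fun _ => hxy.ge_of_gt
  have below : ∀ c, c < y → c ≤ x := fun _ => hxy.le_of_lt
  have hx := hxy.lt
  simp only [Equiv.swap_apply_def]
  split_ifs <;> grind

theorem Equiv.swap_add_one_strictMonoOn {s : Set ℕ} (j : ℕ) (hs : ¬(j ∈ s ∧ j + 1 ∈ s)) :
    StrictMonoOn (Equiv.swap j (j + 1)) s :=
  Equiv.swap_strictMonoOn_of_covBy (Order.covBy_add_one j) hs

theorem List.mem_set_or_eq_getElem_iff {α : Type*} {l : List α} {i : ℕ} (h : i < l.length)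
    {x y : α} : y ∈ l.set i x ∨ y = l[i] ↔ y = x ∨ y ∈ l := by
  constructor
  · rintro (hy | rfl)
    · exact (List.mem_or_eq_of_mem_set hy).symm
    · exact Or.inr (List.getElem_mem h)
  · rintro (rfl | hy)
    · exact Or.inl (List.mem_set h y)
    · obtain ⟨m, hm, rfl⟩ := List.getElem_of_mem hy
      by_cases hmi : m = i
      · exact Or.inr (by simp [hmi])
      · left
        rw [← List.getElem_set_ne (Ne.symm hmi) (a := x) (by simpa using hm)]
        exact List.getElem_mem _

theorem List.findIdx_congr_of_mem {α : Type*} {p q : α → Bool} :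
    ∀ {l : List α}, (∀ x ∈ l, p x = q x) → l.findIdx p = l.findIdx q
  | [], _ => rfl
  | a :: l, h => by
    simp only [List.findIdx_cons, h a List.mem_cons_self,
      List.findIdx_congr_of_mem fun x hx => h x (List.mem_cons_of_mem a hx)]

theorem Finset.card_filter_eq_add_sub {α : Type*} (s : Finset α) (p q : α → Prop)
    [DecidablePred p] [DecidablePred q] :
    ((s.filter q).card : ℤ) = (s.filter p).card + (s.filter fun a => q a ∧ ¬p a).card -
      (s.filter fun a => p a ∧ ¬q a).card := by
  have hp := Finset.card_filter_add_card_filter_not (s := s.filter p) q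
  have hq := Finset.card_filter_add_card_filter_not (s := s.filter q) p
  simp only [Finset.filter_filter] at hp hq
  rw [Finset.filter_congr (p := fun a => q a ∧ p a) (q := fun a => p a ∧ q a)
    fun _ _ => and_comm] at hq
  omega

def relabel (f : ℕ → ℕ) (T : Tab) : Tab := T.map (List.map f)

@[simp] theorem length_relabel (f : ℕ → ℕ) (T : Tab) : (relabel f T).length = T.length :=
  List.length_map _

@[simp] theorem relabel_cons (f : ℕ → ℕ) (row : List ℕ) (T : Tab) :
    relabel f (row :: T) = row.map f :: relabel f T := rfl

theorem getD_relabel (f : ℕ → ℕ) (T : Tab) (i : ℕ) :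
    (relabel f T).getD i [] = (T.getD i []).map f := by
  simp only [relabel, List.getD_eq_getElem?_getD, List.getElem?_map]
  cases T[i]? <;> rfl

theorem flatten_relabel (f : ℕ → ℕ) (T : Tab) : (relabel f T).flatten = T.flatten.map f :=
  List.map_flatten.symm

theorem mem_flatten_rowInsert (x y : ℕ) :
    ∀ T : Tab, y ∈ (rowInsert x T).flatten ↔ y = x ∨ y ∈ T.flatten
  | [] => by simp [rowInsert]
  | row :: rest => by
    rw [rowInsert]
    split_ifs with h
    · simp only [List.flatten_cons, List.mem_append, List.get_eq_getElem,
        mem_flatten_rowInsert _ _ rest, ← or_assoc, List.mem_set_or_eq_getElem_iff h]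
    · simp only [List.flatten_cons, List.mem_append, List.mem_singleton]
      tauto

theorem mem_flatten_place (Q : Tab) (i lab y : ℕ) :
    y ∈ (place Q i lab).flatten ↔ y = lab ∨ y ∈ Q.flatten := by
  unfold place
  split_ifs with h
  · conv_rhs => rw [← List.take_append_drop i Q, List.drop_eq_getElem_cons h]
    rw [List.set_eq_take_append_cons_drop, if_pos h, List.getD_eq_getElem _ _ h]
    simp only [List.flatten_append, List.flatten_cons, List.mem_append, List.mem_singleton]
    tauto
  · simp only [List.flatten_append, List.flatten_cons, List.flatten_nil, List.mem_append,
      List.mem_singleton, List.append_nil]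
    tauto

theorem rowInsert_relabel {f : ℕ → ℕ} {s : Set ℕ} (hf : StrictMonoOn f s) :
    ∀ (T : Tab) {x : ℕ}, x ∈ s → (∀ y ∈ T.flatten, y ∈ s) →
      rowInsert (f x) (relabel f T) = relabel f (rowInsert x T)
  | [], _, _, _ => rfl
  | row :: rest, x, hx, hT => by
    have hrow : ∀ y ∈ row, y ∈ s := fun y hy => hT y (by simp [hy])
    have hrest : ∀ y ∈ rest.flatten, y ∈ s := fun y hy => hT y (by simp [hy])
    have hidx : (row.map f).findIdx (fun y => decide (f x < y)) =
        row.findIdx (fun y => decide (x < y)) := by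
      rw [List.findIdx_map]
      refine List.findIdx_congr_of_mem fun y hy => ?_
      simp only [comp_apply, decide_eq_decide]
      exact hf.lt_iff_lt hx (hrow y hy)
    simp only [relabel_cons, rowInsert, hidx, List.length_map]
    split_ifs with h
    · simp only [List.get_eq_getElem, List.getElem_map, relabel_cons, List.map_set,
        rowInsert_relabel hf rest (hrow _ (List.getElem_mem h)) hrest]
    · simp

theorem place_relabel (g : ℕ → ℕ) (Q : Tab) (i lab : ℕ) :
    place (relabel g Q) i (g lab) = relabel g (place Q i lab) := by
  unfold place
  rw [length_relabel, getD_relabel]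
  split_ifs
  · simp [relabel, List.map_set]
  · simp [relabel]

theorem RSstep_relabel_fst {f : ℕ → ℕ} {s : Set ℕ} (hf : StrictMonoOn f s) {P : Tab} (Q : Tab)
    {x : ℕ} (lab : ℕ) (hx : x ∈ s) (hP : ∀ y ∈ P.flatten, y ∈ s) :
    RSstep (relabel f P, Q) (f x, lab) =
      (relabel f (RSstep (P, Q) (x, lab)).1, (RSstep (P, Q) (x, lab)).2) := by
  simp only [RSstep, rowInsert_relabel hf P hx hP, length_relabel, getD_relabel, List.length_map]

theorem RSstep_relabel_snd (g : ℕ → ℕ) (P Q : Tab) (x lab : ℕ) :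
    RSstep (P, relabel g Q) (x, g lab) =
      ((RSstep (P, Q) (x, lab)).1, relabel g (RSstep (P, Q) (x, lab)).2) := by
  simp only [RSstep, place_relabel]

theorem foldl_RSstep_relabel_fst {f : ℕ → ℕ} {s : Set ℕ} (hf : StrictMonoOn f s) :
    ∀ (word : List (ℕ × ℕ)) (P Q : Tab), (∀ y ∈ P.flatten, y ∈ s) → (∀ p ∈ word, p.1 ∈ s) →
      (word.map (Prod.map f id)).foldl RSstep (relabel f P, Q) =
        (relabel f (word.foldl RSstep (P, Q)).1, (word.foldl RSstep (P, Q)).2)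
  | [], _, _, _, _ => rfl
  | (x, lab) :: rest, P, Q, hP, hw => by
    have hx : x ∈ s := hw (x, lab) List.mem_cons_self
    have hP' : ∀ y ∈ (rowInsert x P).flatten, y ∈ s := fun y hy => by
      rcases (mem_flatten_rowInsert x y P).1 hy with rfl | hy
      exacts [hx, hP y hy]
    simp only [List.map_cons, List.foldl_cons, Prod.map_apply, id_eq,
      RSstep_relabel_fst hf Q lab hx hP]
    exact foldl_RSstep_relabel_fst hf rest _ _ hP' fun p hp => hw p (List.mem_cons_of_mem _ hp)

theorem foldl_RSstep_relabel_snd (g : ℕ → ℕ) :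
    ∀ (word : List (ℕ × ℕ)) (P Q : Tab),
      (word.map (Prod.map id g)).foldl RSstep (P, relabel g Q) =
        ((word.foldl RSstep (P, Q)).1, relabel g (word.foldl RSstep (P, Q)).2)
  | [], _, _ => rfl
  | (x, lab) :: rest, P, Q => by
    simp only [List.map_cons, List.foldl_cons, Prod.map_apply, id_eq, RSstep_relabel_snd]
    exact foldl_RSstep_relabel_snd g rest _ _

theorem RSword_map_fst {f : ℕ → ℕ} (word : List (ℕ × ℕ))
    (hf : StrictMonoOn f {x | x ∈ word.map Prod.fst}) :
    RSword (word.map (Prod.map f id)) = (relabel f (RSword word).1, (RSword word).2) :=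
  foldl_RSstep_relabel_fst hf word [] [] (by simp) fun p hp => List.mem_map_of_mem hp

theorem RSword_map_snd (g : ℕ → ℕ) (word : List (ℕ × ℕ)) :
    RSword (word.map (Prod.map id g)) = ((RSword word).1, relabel g (RSword word).2) :=
  foldl_RSstep_relabel_snd g word [] []

theorem mem_flatten_foldl_RSstep_fst (y : ℕ) :
    ∀ (word : List (ℕ × ℕ)) (PQ : Tab × Tab),
      y ∈ (word.foldl RSstep PQ).1.flatten ↔ y ∈ PQ.1.flatten ∨ y ∈ word.map Prod.fst
  | [], _ => by simp
  | (x, lab) :: rest, PQ => by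
    simp only [List.foldl_cons, List.map_cons, List.mem_cons, mem_flatten_foldl_RSstep_fst y rest]
    simp only [RSstep, mem_flatten_rowInsert]
    tauto

theorem mem_flatten_foldl_RSstep_snd (y : ℕ) :
    ∀ (word : List (ℕ × ℕ)) (PQ : Tab × Tab),
      y ∈ (word.foldl RSstep PQ).2.flatten ↔ y ∈ PQ.2.flatten ∨ y ∈ word.map Prod.snd
  | [], _ => by simp
  | (x, lab) :: rest, PQ => by
    simp only [List.foldl_cons, List.map_cons, List.mem_cons, mem_flatten_foldl_RSstep_snd y rest]
    simp only [RSstep, mem_flatten_place]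
    tauto

theorem mem_labels_RSword_fst (word : List (ℕ × ℕ)) (y : ℕ) :
    y ∈ labels (RSword word).1 ↔ y ∈ word.map Prod.fst := by
  rw [labels, List.mem_toFinset, RSword, mem_flatten_foldl_RSstep_fst]
  simp

theorem mem_labels_RSword_snd (word : List (ℕ × ℕ)) (y : ℕ) :
    y ∈ labels (RSword word).2 ↔ y ∈ word.map Prod.snd := by
  rw [labels, List.mem_toFinset, RSword, mem_flatten_foldl_RSstep_snd]
  simp

theorem labels_relabel {f : ℕ → ℕ} (hf : Injective f) (T : Tab) :
    labels (relabel f T) = (labels T).map ⟨f, hf⟩ := by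
  ext y
  simp only [labels, flatten_relabel, List.mem_toFinset, List.mem_map, Finset.mem_map,
    Embedding.coeFn_mk]

theorem card_filter_labels_relabel_product {f : ℕ → ℕ} (hf : Injective f) (A B : Tab)
    (p : ℕ × ℕ → Prop) [DecidablePred p] :
    ((labels (relabel f A) ×ˢ labels (relabel f B)).filter p).card =
      ((labels A ×ˢ labels B).filter fun q => p (f q.1, f q.2)).card := by
  rw [labels_relabel hf, labels_relabel hf, ← Finset.prodMap_map_product, Finset.filter_map,
    Finset.card_map]
  rfl

theorem rowOf_relabel {f : ℕ → ℕ} (hf : Injective f) (T : Tab) (x : ℕ) :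
    rowOf (relabel f T) (f x) = rowOf T x := by
  rw [rowOf, relabel, List.findIdx_map]
  exact List.findIdx_congr_of_mem fun row _ => by simp [List.mem_map, hf.eq_iff]

theorem invTab_relabel {f : ℕ → ℕ} (hinj : Injective f) (T : Tab)
    (hf : StrictMonoOn f (labels T)) : invTab (relabel f T) = invTab T := by
  rw [invTab, invTab, card_filter_labels_relabel_product hinj]
  congr 1
  refine Finset.filter_congr fun q hq => ?_
  rw [Finset.mem_product] at hq
  rw [rowOf_relabel hinj, rowOf_relabel hinj, hf.lt_iff_lt hq.1 hq.2]

theorem eMulti_relabel {r : ℕ} (f : ℕ → ℕ) (T : Fin r → Tab) :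
    eMulti (fun k => relabel f (T k)) = eMulti T := by
  simp only [eMulti, eTab, length_relabel, getD_relabel, List.length_map]

theorem spin_relabel {r : ℕ} (f : ℕ → ℕ) (T : Fin r → Tab) :
    spin (fun k => relabel f (T k)) = spin T := by
  simp only [spin, twoSpin, sizeTab, flatten_relabel, List.length_map]

theorem crossInv_relabel_swap (j : ℕ) (A B : Tab) :
    (crossInv (relabel (Equiv.swap j (j + 1)) A) (relabel (Equiv.swap j (j + 1)) B) : ℤ) =
      crossInv A B + (if j ∈ labels A ∧ j + 1 ∈ labels B then 1 else 0) -
        (if j + 1 ∈ labels A ∧ j ∈ labels B then 1 else 0) := by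
  rw [crossInv, crossInv, card_filter_labels_relabel_product (Equiv.injective _),
    Finset.card_filter_eq_add_sub _ (fun q : ℕ × ℕ => q.2 < q.1)]
  have created : ∀ q : ℕ × ℕ, (Equiv.swap j (j + 1) q.2 < Equiv.swap j (j + 1) q.1 ∧
      ¬q.2 < q.1) ↔ q = (j, j + 1) := fun ⟨a, b⟩ => by
    simp only [Equiv.swap_apply_def, Prod.mk.injEq]; split_ifs <;> omega
  have destroyed : ∀ q : ℕ × ℕ, (q.2 < q.1 ∧
      ¬Equiv.swap j (j + 1) q.2 < Equiv.swap j (j + 1) q.1) ↔ q = (j + 1, j) := fun ⟨a, b⟩ => by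
    simp only [Equiv.swap_apply_def, Prod.mk.injEq]; split_ifs <;> omega
  simp only [created, destroyed, Finset.filter_eq', Finset.mem_product]
  split_ifs <;> simp

theorem invMulti_relabel_swap {r : ℕ} (j : ℕ) (T : Fin r → Tab) {k₀ l₀ : Fin r} (hne : k₀ ≠ l₀)
    (hj : ∀ k, j ∈ labels (T k) ↔ k = k₀) (hj1 : ∀ k, j + 1 ∈ labels (T k) ↔ k = l₀) :
    (invMulti (fun k => relabel (Equiv.swap j (j + 1)) (T k)) : ℤ) =
      invMulti T + (if k₀ < l₀ then 1 else 0) - (if l₀ < k₀ then 1 else 0) := by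
  have hinv : ∀ k, invTab (relabel (Equiv.swap j (j + 1)) (T k)) = invTab (T k) := fun k =>
    invTab_relabel (Equiv.injective _) _ <| Equiv.swap_add_one_strictMonoOn j fun h =>
      hne (((hj k).1 h.1).symm.trans ((hj1 k).1 h.2))
  have hcross : ∀ k l : Fin r,
      ((if k < l then crossInv (relabel (Equiv.swap j (j + 1)) (T k))
          (relabel (Equiv.swap j (j + 1)) (T l)) else 0 : ℕ) : ℤ) =
        ((if k < l then crossInv (T k) (T l) else 0 : ℕ) : ℤ) +
          (if k = k₀ ∧ l = l₀ ∧ k₀ < l₀ then 1 else 0) -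
          (if k = l₀ ∧ l = k₀ ∧ l₀ < k₀ then 1 else 0) := by
    intro k l
    by_cases hkl : k < l
    · simp only [hkl, if_true, crossInv_relabel_swap, hj, hj1]
      grind
    · grind
  simp only [invMulti, hinv, Nat.cast_add, Nat.cast_sum, hcross, Finset.sum_add_distrib,
    Finset.sum_sub_distrib, ite_and, Finset.sum_ite_irrel, Finset.sum_ite_eq', Finset.mem_univ,
    if_true, Finset.sum_const_zero]
  ring

theorem signMulti_relabel_swap {r : ℕ} (j : ℕ) (T : Fin r → Tab) {k₀ l₀ : Fin r} (hne : k₀ ≠ l₀)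
    (hj : ∀ k, j ∈ labels (T k) ↔ k = k₀) (hj1 : ∀ k, j + 1 ∈ labels (T k) ↔ k = l₀) :
    signMulti (fun k => relabel (Equiv.swap j (j + 1)) (T k)) = -signMulti T := by
  have h := invMulti_relabel_swap j T hne hj hj1
  rw [signMulti, signMulti]
  rcases hne.lt_or_gt with hlt | hlt
  · rw [if_pos hlt, if_neg hlt.not_gt] at h
    rw [show invMulti _ = invMulti T + 1 by omega, pow_succ]
    ring
  · rw [if_neg hlt.not_gt, if_pos hlt] at h
    rw [show invMulti T = invMulti (fun k => relabel (Equiv.swap j (j + 1)) (T k)) + 1 by omega,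
      pow_succ]
    ring

section ColoredPermutations

variable {r n : ℕ}

theorem val_swap_add_one {j : ℕ} (h1 : 1 ≤ j) (h2 : j + 1 ≤ n) (m : Fin n) :
    ((Equiv.swap (⟨j - 1, by omega⟩ : Fin n) ⟨j, by omega⟩ m : Fin n) : ℕ) + 1 =
      Equiv.swap j (j + 1) ((m : ℕ) + 1) := by
  have hinj : Injective fun m : Fin n => (m : ℕ) + 1 := fun a b h => Fin.ext (by simpa using h)
  have := hinj.swap_apply ⟨j - 1, by omega⟩ ⟨j, by omega⟩ m
  rw [Nat.sub_add_cancel h1] at this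
  exact this.symm

theorem swap_strictMonoOn_of_not_mem {j : ℕ} (h1 : 1 ≤ j) (h2 : j + 1 ≤ n) {s : Set (Fin n)}
    (hs : ¬((⟨j - 1, by omega⟩ : Fin n) ∈ s ∧ (⟨j, by omega⟩ : Fin n) ∈ s)) :
    StrictMonoOn (Equiv.swap (⟨j - 1, by omega⟩ : Fin n) ⟨j, by omega⟩) s :=
  Equiv.swap_strictMonoOn_of_covBy
    (Fin.covBy_iff.2 (Nat.covBy_iff_add_one_eq.2 (Nat.sub_add_cancel h1))) hs

/-- The index `a i ∈ {0, …, r - 1}` of the component of `RS w` that receives column `i`. -/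
def GW.color [NeZero r] (w : GW r n) (i : Fin n) : Fin r := ⟨(w.a i).val, ZMod.val_lt _⟩

theorem GW.color_ne_color [NeZero r] {w : GW r n} {i i' : Fin n} (h : w.a i ≠ w.a i') :
    w.color i ≠ w.color i' :=
  fun he => h (ZMod.val_injective r (Fin.mk.inj he))

theorem mem_labelIdx (w : GW r n) (k : ℕ) (i : Fin n) :
    i ∈ labelIdx w k ↔ (w.a i).val = k := by
  simp [labelIdx]

theorem mem_map_fst_wordPairs (w : GW r n) (k : ℕ) (m : Fin n) :
    (m : ℕ) + 1 ∈ (wordPairs w k).map Prod.fst ↔ (w.a (w.σ⁻¹ m)).val = k := by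
  simp only [wordPairs, labelIdx, List.map_map, List.mem_map, List.mem_filter,
    List.mem_finRange, true_and, comp_apply, decide_eq_true_eq, add_left_inj, ← Fin.ext_iff]
  constructor
  · rintro ⟨i, hi, rfl⟩
    simpa using hi
  · intro h
    exact ⟨w.σ⁻¹ m, h, by simp⟩

theorem mem_map_snd_wordPairs (w : GW r n) (k : ℕ) (m : Fin n) :
    (m : ℕ) + 1 ∈ (wordPairs w k).map Prod.snd ↔ (w.a m).val = k := by
  simp [wordPairs, labelIdx, ← Fin.ext_iff]

theorem mem_labels_Ptab [NeZero r] (w : GW r n) (k : Fin r) (m : Fin n) :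
    (m : ℕ) + 1 ∈ labels (Ptab w k) ↔ k = w.color (w.σ⁻¹ m) := by
  rw [Ptab, mem_labels_RSword_fst, mem_map_fst_wordPairs, GW.color, Fin.ext_iff, eq_comm]

theorem mem_labels_Qtab [NeZero r] (w : GW r n) (k : Fin r) (m : Fin n) :
    (m : ℕ) + 1 ∈ labels (Qtab w k) ↔ k = w.color m := by
  rw [Qtab, mem_labels_RSword_snd, mem_map_snd_wordPairs, GW.color, Fin.ext_iff, eq_comm]

theorem wordPairs_Lop (w : GW r n) {j : ℕ} (h1 : 1 ≤ j) (h2 : j + 1 ≤ n) (k : ℕ) :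
    wordPairs (Lop w j h1 h2) k = (wordPairs w k).map (Prod.map (Equiv.swap j (j + 1)) id) := by
  have ha : ∀ i, (Lop w j h1 h2).a i = w.a i := fun i => zero_add _
  simp only [wordPairs, labelIdx, ha, List.map_map]
  refine List.map_congr_left fun i _ => ?_
  simp [Lop, sEl, val_swap_add_one h1 h2]

theorem labelIdx_Rop [NeZero r] (w : GW r n) {j : ℕ} (h1 : 1 ≤ j) (h2 : j + 1 ≤ n)
    (ha : RightAdm w j h1 h2) (k : ℕ) :
    labelIdx (Rop w j h1 h2) k =
      (labelIdx w k).map (Equiv.swap (⟨j - 1, by omega⟩ : Fin n) ⟨j, by omega⟩) := by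
  set sw := Equiv.swap (⟨j - 1, by omega⟩ : Fin n) ⟨j, by omega⟩
  have hmono : StrictMonoOn sw {i | i ∈ labelIdx w k} :=
    swap_strictMonoOn_of_not_mem h1 h2 fun ⟨hx, hy⟩ =>
      ha (ZMod.val_injective r (((mem_labelIdx w k _).1 hx).trans ((mem_labelIdx w k _).1 hy).symm))
  have hmem : ∀ i, i ∈ labelIdx (Rop w j h1 h2) k ↔ i ∈ (labelIdx w k).map sw := by
    intro i
    have hRa : (Rop w j h1 h2).a i = w.a (sw i) := add_zero _
    rw [List.mem_map, mem_labelIdx, hRa]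
    constructor
    · exact fun h => ⟨sw i, (mem_labelIdx w k _).2 h, Equiv.swap_apply_self _ _ _⟩
    · rintro ⟨i, hi, rfl⟩
      rwa [Equiv.swap_apply_self, ← mem_labelIdx]
  exact List.Subset.antisymm_of_pairwise ((List.pairwise_lt_finRange n).filter _)
    (List.pairwise_map.2 (((List.pairwise_lt_finRange n).filter _).imp_of_mem
      fun ha hb hab => hmono ha hb hab))
    (fun i hi => (hmem i).1 hi) (fun i hi => (hmem i).2 hi)

theorem wordPairs_Rop [NeZero r] (w : GW r n) {j : ℕ} (h1 : 1 ≤ j) (h2 : j + 1 ≤ n)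
    (ha : RightAdm w j h1 h2) (k : ℕ) :
    wordPairs (Rop w j h1 h2) k = (wordPairs w k).map (Prod.map id (Equiv.swap j (j + 1))) := by
  rw [wordPairs, labelIdx_Rop w h1 h2 ha, wordPairs, List.map_map, List.map_map]
  refine List.map_congr_left fun i _ => ?_
  simp [Rop, sEl, val_swap_add_one h1 h2]

theorem piStat_Lop [NeZero r] (i : ℕ) (w : GW r n) {j : ℕ} (h1 : 1 ≤ j) (h2 : j + 1 ≤ n)
    (ha : LeftAdm w j h1 h2) : piStat r n i (Lop w j h1 h2) = -piStat r n i w := by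
  have hj : ∀ k, j ∈ labels (Ptab w k) ↔ k = w.color (w.σ⁻¹ ⟨j - 1, by omega⟩) := fun k => by
    simpa [Nat.sub_add_cancel h1] using mem_labels_Ptab w k ⟨j - 1, by omega⟩
  have hj1 : ∀ k, j + 1 ∈ labels (Ptab w k) ↔ k = w.color (w.σ⁻¹ ⟨j, by omega⟩) :=
    fun k => mem_labels_Ptab w k ⟨j, by omega⟩
  have hne := GW.color_ne_color ha
  have hRS : ∀ k : Fin r, RSword (wordPairs (Lop w j h1 h2) k) =
      (relabel (Equiv.swap j (j + 1)) (Ptab w k), Qtab w k) := fun k => by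
    refine (wordPairs_Lop w h1 h2 k).symm ▸ RSword_map_fst _ ?_
    refine Equiv.swap_add_one_strictMonoOn j fun ⟨hu, hv⟩ => hne ?_
    exact ((hj k).1 ((mem_labels_RSword_fst _ _).2 hu)).symm.trans
      ((hj1 k).1 ((mem_labels_RSword_fst _ _).2 hv))
  rw [piStat, piStat, show Ptab (Lop w j h1 h2) = _ from funext fun k => congrArg Prod.fst (hRS k),
    show Qtab (Lop w j h1 h2) = _ from funext fun k => congrArg Prod.snd (hRS k),
    eMulti_relabel, spin_relabel, signMulti_relabel_swap j _ hne hj hj1]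
  ring

theorem piStat_Rop [NeZero r] (i : ℕ) (w : GW r n) {j : ℕ} (h1 : 1 ≤ j) (h2 : j + 1 ≤ n)
    (ha : RightAdm w j h1 h2) : piStat r n i (Rop w j h1 h2) = -piStat r n i w := by
  have hj : ∀ k, j ∈ labels (Qtab w k) ↔ k = w.color ⟨j - 1, by omega⟩ := fun k => by
    simpa [Nat.sub_add_cancel h1] using mem_labels_Qtab w k ⟨j - 1, by omega⟩
  have hj1 : ∀ k, j + 1 ∈ labels (Qtab w k) ↔ k = w.color ⟨j, by omega⟩ :=
    fun k => mem_labels_Qtab w k ⟨j, by omega⟩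
  have hRS : ∀ k : Fin r, RSword (wordPairs (Rop w j h1 h2) k) =
      (Ptab w k, relabel (Equiv.swap j (j + 1)) (Qtab w k)) := fun k => by
    rw [wordPairs_Rop w h1 h2 ha, RSword_map_snd]
    rfl
  rw [piStat, piStat, show Ptab (Rop w j h1 h2) = _ from funext fun k => congrArg Prod.fst (hRS k),
    show Qtab (Rop w j h1 h2) = _ from funext fun k => congrArg Prod.snd (hRS k),
    spin_relabel, signMulti_relabel_swap j _ (GW.color_ne_color ha) hj hj1]
  ring

end ColoredPermutations

theorem piStat_neg_of_admStep_general (r n : ℕ) (hr : 1 ≤ r)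
    (w w' : GW r n) (h : AdmStep r n w w') (i : ℕ) :
    piStat r n i w' = -piStat r n i w := by
  have : NeZero r := NeZero.of_pos hr
  cases h with
  | left j h1 h2 ha => exact piStat_Lop i w h1 h2 ha
  | right j h1 h2 ha => exact piStat_Rop i w h1 h2 ha

/-- If `w'` is obtained from `w` by a single admissible transformation, then
`π_i w' = -π_i w` for every `0 ≤ i ≤ r - 1`. -/
theorem piStat_neg_of_admStep (r n : ℕ) (hr : 1 ≤ r) (hn : 1 ≤ n)
    (w w' : GW r n) (h : AdmStep r n w w') (i : ℕ) (hi : i ≤ r - 1) :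
    piStat r n i w' = -piStat r n i w :=
  piStat_neg_of_admStep_general r n hr w w' h i
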